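/- Let φ : K[z_1, …, z_n] → K[t_1, …, t_d] be a monomial map and M a monomial ideal in K[t_1, …, t_d]. Then there exists a monomial ideal M' in K[z_1, …, z_n] such that φ^{-1}(M) = M' + ker(φ). -/

import Mathlib

open MvPolynomial

/-- The monomial map `K[z_1, …, z_n] → K[t_1, …, t_d]` sending `z_i` to the monomial
with exponent vector `B i`. -/
noncomputable def monomialMap (K : Type*) [Field K] {n d : ℕ}
    (B : Fin n → (Fin d →₀ ℕ)) :
    MvPolynomial (Fin n) K →ₐ[K] MvPolynomial (Fin d) K :=
  aeval fun i => monomial (B i) (1 : K)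

lemma prod_monomial_one {K : Type*} [Field K] {d : ℕ} {ι : Type*} (s : Finset ι)
    (g : ι → (Fin d →₀ ℕ)) :
    (∏ i ∈ s, monomial (g i) (1 : K)) = monomial (∑ i ∈ s, g i) 1 := by
  classical
  induction s using Finset.induction with
  | empty => simp [monomial_zero']
  | insert _ _ h ih =>
      rw [Finset.prod_insert h, ih, Finset.sum_insert h, monomial_mul, one_mul]

lemma monomialMap_monomial {K : Type*} [Field K] {n d : ℕ} (B : Fin n → (Fin d →₀ ℕ))
    (u : Fin n →₀ ℕ) (c : K) :
    monomialMap K B (monomial u c) = monomial (u.sum fun i k => k • B i) c := by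
  rw [monomialMap, aeval_monomial]
  simp_rw [monomial_pow, one_pow]
  rw [Finsupp.prod, prod_monomial_one, Finsupp.sum, algebraMap_eq, C_mul_monomial, mul_one]

/-- for a monomial map `φ` and a monomial ideal `M`, there is a monomial
ideal `M'` with `φ⁻¹(M) = M' + ker φ`. -/
theorem stmt6 (K : Type*) [Field K] (n d : ℕ) (B : Fin n → (Fin d →₀ ℕ))
    (T : Set (Fin d →₀ ℕ)) :
    ∃ S : Set (Fin n →₀ ℕ),
      Ideal.comap (monomialMap K B)
          (Ideal.span ((fun u => monomial u (1 : K)) '' T)) =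
        Ideal.span ((fun u => monomial u (1 : K)) '' S) +
          RingHom.ker (monomialMap K B) := by
  classical
  set φ := monomialMap K B with hφ
  set A : (Fin n →₀ ℕ) → (Fin d →₀ ℕ) := fun u => u.sum fun i k => k • B i with hA
  have hA' : ∀ u, (u.sum fun i k => k • B i) = A u := fun u => rfl
  refine ⟨{u | ∃ s ∈ T, s ≤ A u}, ?_⟩
  apply le_antisymm
  · intro p hp
    rw [Ideal.mem_comap, mem_ideal_span_monomial_image] at hp
    -- split p into good and bad parts
    set F : Finset (Fin n →₀ ℕ) := p.support.filter (fun u => ¬ ∃ s ∈ T, s ≤ A u) with hF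
    set G : Finset (Fin n →₀ ℕ) := p.support.filter (fun u => ∃ s ∈ T, s ≤ A u) with hG
    have hsplit : p = (∑ u ∈ G, monomial u (coeff u p)) + ∑ u ∈ F, monomial u (coeff u p) := by
      rw [hG, hF, Finset.sum_filter_add_sum_filter_not]
      exact (as_sum p)
    rw [hsplit]
    apply Ideal.add_mem
    · apply Ideal.mem_sup_left
      rw [mem_ideal_span_monomial_image]
      intro xi hxi
      have := Finset.mem_coe.2 hxi
      have hxi' : xi ∈ G := by
        have := MvPolynomial.support_sum (s := G) (f := fun u => monomial u (coeff u p)) hxi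
        simp only [Finset.mem_biUnion] at this
        obtain ⟨u, hu, hxu⟩ := this
        have := support_monomial_subset hxu
        simp only [Finset.mem_singleton] at this
        rwa [this]
      rw [hG, Finset.mem_filter] at hxi'
      obtain ⟨-, s, hs, hsle⟩ := hxi'
      exact ⟨xi, ⟨s, hs, hsle⟩, le_rfl⟩
    · apply Ideal.mem_sup_right
      rw [RingHom.mem_ker]
      -- compute coefficients
      have hcoeff : ∀ (E : Finset (Fin n →₀ ℕ)) (v : Fin d →₀ ℕ),
          coeff v (φ (∑ u ∈ E, monomial u (coeff u p))) =
            ∑ u ∈ E, if A u = v then coeff u p else 0 := by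
        intro E v
        rw [map_sum]
        simp_rw [hφ, monomialMap_monomial, hA']
        rw [coeff_sum]
        exact Finset.sum_congr rfl fun u _ => coeff_monomial v (A u) _
      apply MvPolynomial.ext
      intro v
      rw [hcoeff, coeff_zero]
      by_cases hv : ∃ s ∈ T, s ≤ v
      · apply Finset.sum_eq_zero
        intro u hu
        rw [hF, Finset.mem_filter] at hu
        rw [if_neg]
        intro hAu
        exact hu.2 (hAu ▸ hv)
      · -- bad v: sum over F equals sum over p.support equals coeff v (φ p) = 0
        have hsub : F ⊆ p.support := Finset.filter_subset _ _
        have h1 : ∑ u ∈ F, (if A u = v then coeff u p else 0) =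
            ∑ u ∈ p.support, if A u = v then coeff u p else 0 := by
          apply Finset.sum_subset hsub
          intro u hu huF
          rw [hF, Finset.mem_filter, not_and, not_not] at huF
          rw [if_neg]
          intro hAu
          exact hv (hAu ▸ huF hu)
        have h2 : coeff v (φ p) = ∑ u ∈ p.support, if A u = v then coeff u p else 0 := by
          conv_lhs => rw [as_sum p]
          exact hcoeff p.support v
        have h3 : coeff v (φ p) = 0 := by
          by_contra h
          exact hv (hp v (mem_support_iff.2 h))
        rw [h1, ← h2, h3]
  · rw [Ideal.add_eq_sup, sup_le_iff]
    constructor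
    · rw [Ideal.span_le]
      rintro x ⟨u, ⟨s, hs, hsle⟩, rfl⟩
      simp only [SetLike.mem_coe, Ideal.mem_comap]
      rw [monomialMap_monomial, hA' u, mem_ideal_span_monomial_image]
      intro xi hxi
      have := support_monomial_subset hxi
      simp only [Finset.mem_singleton] at this
      exact ⟨s, hs, this ▸ hsle⟩
    · intro x hx
      rw [RingHom.mem_ker] at hx
      rw [Ideal.mem_comap, hx]
      exact Ideal.zero_mem _
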